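/- Let C_M ⊆ C_{M-1} ⊆ ... ⊆ C_1 be nested linear codes of length n over F_q and A an M×N NSC matrix. Let c = (c_1, c_2, ..., c_N) be a codeword of C = [C_1,...,C_M]·A written in blocks c_j ∈ F_q^n. If exactly k of the blocks c_1,...,c_N are zero vectors for some 1 ≤ k ≤ M-1, then every block c_j lies in C_{k+1}. -/

import Mathlib

/-- The matrix-product code `[C_1,...,C_M]·A`. -/
def MPcode {F : Type*} [Field F] {n M N : ℕ}
    (C : Fin M → Set (Fin n → F)) (A : Matrix (Fin M) (Fin N) F) :
    Set (Fin N × Fin n → F) :=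
  { y | ∃ x : Fin M → Fin n → F, (∀ m, x m ∈ C m) ∧
        ∀ j i, y (j, i) = ∑ m, A m j * x m i }

/-- non-singular by columns. -/
def NSC {F : Type*} [Field F] {M N : ℕ} (A : Matrix (Fin M) (Fin N) F) : Prop :=
  ∀ (t : ℕ) (_ : 0 < t) (htM : t ≤ M) (g : Fin t → Fin N), StrictMono g →
    (Matrix.of (fun i j : Fin t => A (Fin.castLE htM i) (g j))).det ≠ 0

/-! Write the codeword as `c_j = ∑ₘ a_{mj} x_m`. If the blocks `c_j` with `j ∈ S`, `|S| = k`,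
vanish, then modulo `C_{k+1}` (which contains `x_m` for `m > k` by nestedness) the vectors
`x_1, …, x_k` satisfy a homogeneous `k × k` system whose matrix is the minor of `A` on the
first `k` rows and the columns `S`. This minor is invertible because `A` is NSC, so
`x_1, …, x_k ∈ C_{k+1}` as well, and hence every block `c_j` lies in `C_{k+1}`. -/

theorem Matrix.eq_zero_of_sum_smul_eq_zero {R V ι : Type*} [CommRing R] [AddCommGroup V]
    [Module R V] [Fintype ι] [DecidableEq ι] {B : Matrix ι ι R} (hB : IsUnit B.det)
    {v : ι → V} (h : ∀ j, ∑ i, B i j • v i = 0) (l : ι) : v l = 0 := by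
  have hv : v l = ∑ j, B⁻¹ j l • ∑ i, B i j • v i := by
    simp only [Finset.smul_sum, smul_smul]
    rw [Finset.sum_comm]
    simp only [← Finset.sum_smul, mul_comm (B⁻¹ _ _), ← Matrix.mul_apply,
      Matrix.mul_nonsing_inv _ hB, Matrix.one_apply, ite_smul, one_smul, zero_smul,
      Finset.sum_ite_eq', Finset.mem_univ, if_true]
  simp [hv, h]

theorem mem_MPcode_iff {F : Type*} [Field F] {n M N : ℕ} (C : Fin M → Set (Fin n → F))
    (A : Matrix (Fin M) (Fin N) F) (y : Fin N × Fin n → F) :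
    y ∈ MPcode C A ↔ ∃ x : Fin M → Fin n → F, (∀ m, x m ∈ C m) ∧
      ∀ j, (fun i => y (j, i)) = ∑ m, A m j • x m := by
  simp only [MPcode, Set.mem_ofPred_eq, funext_iff, Finset.sum_apply, Pi.smul_apply, smul_eq_mul]

theorem mem_of_sum_smul_mem_of_isUnit_minor {R V : Type*} [CommRing R] [AddCommGroup V]
    [Module R V] {M N k : ℕ} (hkM : k ≤ M) (A : Matrix (Fin M) (Fin N) R) (g : Fin k → Fin N)
    (hminor : IsUnit (Matrix.of fun i j : Fin k => A (Fin.castLE hkM i) (g j)).det)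
    (P : Submodule R V) (x : Fin M → V) (htail : ∀ m : Fin M, k ≤ m → x m ∈ P)
    (hcol : ∀ j, ∑ m, A m (g j) • x m ∈ P) (m : Fin M) : x m ∈ P := by
  rcases lt_or_ge (m : ℕ) k with hm | hm
  · have hsystem (j : Fin k) :
        ∑ i : Fin k, A (Fin.castLE hkM i) (g j) • P.mkQ (x (Fin.castLE hkM i)) = 0 := by
      rw [← (Submodule.Quotient.mk_eq_zero P).mpr (hcol j), ← P.mkQ_apply, map_sum]
      refine Fintype.sum_of_injective _ (Fin.castLE_injective hkM) _ _ (fun m' hm' => ?_)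
        (fun i => by simp)
      have hkm' : k ≤ (m' : ℕ) := by
        by_contra! h
        exact hm' ⟨⟨m', h⟩, rfl⟩
      simp [(Submodule.Quotient.mk_eq_zero P).mpr (htail m' hkm')]
    simpa [Submodule.Quotient.mk_eq_zero] using
      Matrix.eq_zero_of_sum_smul_eq_zero hminor hsystem ⟨m, hm⟩
  · exact htail m hm

/-- If exactly `k` of the blocks of a matrix-product codeword (for nested codes
`C_M ⊆ ⋯ ⊆ C_1` and an NSC matrix) are zero, with `1 ≤ k ≤ M - 1`, then every
block lies in `C_{k+1}`. -/
theorem stmt8 {F : Type*} [Field F] [DecidableEq F] {n M N : ℕ}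
    (C : Fin M → Submodule F (Fin n → F))
    (hnested : ∀ i j : Fin M, i ≤ j → C j ≤ C i)
    (A : Matrix (Fin M) (Fin N) F) (hA : NSC A)
    (y : Fin N × Fin n → F)
    (hy : y ∈ MPcode (fun m => (C m : Set (Fin n → F))) A)
    (k : ℕ) (hk1 : 1 ≤ k) (hkM : k ≤ M - 1)
    (hzero : (Finset.univ.filter
        (fun j : Fin N => (fun i => y (j, i)) = (0 : Fin n → F))).card = k) :
    ∀ j : Fin N, (fun i => y (j, i)) ∈ C ⟨k, by omega⟩ := by
  have hkM' : k ≤ M := by omega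
  obtain ⟨x, hxC, hblock⟩ := (mem_MPcode_iff _ A y).mp hy
  set g := (Finset.univ.filter
    (fun j : Fin N => (fun i => y (j, i)) = (0 : Fin n → F))).orderEmbOfFin hzero
  have hgzero (j : Fin k) : (fun i => y (g j, i)) = 0 :=
    (Finset.mem_filter.mp (Finset.orderEmbOfFin_mem _ hzero j)).2
  have hx : ∀ m, x m ∈ C ⟨k, by omega⟩ :=
    mem_of_sum_smul_mem_of_isUnit_minor hkM' A g (hA k hk1 hkM' g g.strictMono).isUnit _ x
      (fun m hm => hnested _ m hm (hxC m))
      (fun j => by rw [← hblock, hgzero]; exact zero_mem _)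
  intro j
  rw [hblock]
  exact Submodule.sum_mem _ fun m _ => Submodule.smul_mem _ _ (hx m)
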